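/- arXiv:2401.10615 — 3 statements merged into one kernel-verified Lean document; each statement's English description precedes it below -/
import Mathlib

section
/- Let G be a connected plane graph in which all but at most r vertices have degree at least three and every face is incident to at least seven edges. Then the number of vertices of G is at most 10r - 28. -/
/-- Let `G` be a connected plane graph in which all but at most `r`
vertices have degree at least three and every face is incident to at least seven edges.
Then the number of vertices of `G` is at most `10r - 28`.

The connected plane graph is encoded combinatorially: `V`, `E`, `F` are the numbers of
vertices, edges and faces; `inc e` is the set of faces incident to edge `e` (each edge is
incident to at most two faces); every face is incident to at least seven edges; Euler's
formula `V - E + F = 2` holds (valid for connected plane graphs); the degrees satisfy the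
handshake identity, and connectedness gives minimum degree at least one. -/
theorem plane_graph_few_low_degree_vertices
    (r V E F : ℕ) (deg : Fin V → ℕ) (inc : Fin E → Finset (Fin F))
    (euler : V + F = E + 2)
    (hedge : ∀ e : Fin E, (inc e).card ≤ 2)
    (hface : ∀ f : Fin F, 7 ≤ (Finset.univ.filter (fun e : Fin E => f ∈ inc e)).card)
    (handshake : ∑ v : Fin V, deg v = 2 * E)
    (hmindeg : ∀ v : Fin V, 1 ≤ deg v)
    (hr : (Finset.univ.filter (fun v : Fin V => deg v < 3)).card ≤ r) :
    (V : ℤ) ≤ 10 * r - 28 := by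
  -- Double counting: 7F ≤ 2E
  have h1 : 7 * F ≤ 2 * E := by
    calc 7 * F = ∑ _f : Fin F, 7 := by simp [mul_comm]
      _ ≤ ∑ f : Fin F, (Finset.univ.filter (fun e : Fin E => f ∈ inc e)).card :=
          Finset.sum_le_sum (fun f _ => hface f)
      _ = ∑ e : Fin E, (inc e).card := by
          simp only [Finset.card_filter]
          rw [Finset.sum_comm]
          congr 1
          ext e
          rw [← Finset.sum_filter]
          simp [Finset.filter_mem_eq_inter]
      _ ≤ ∑ _e : Fin E, 2 := Finset.sum_le_sum (fun e _ => hedge e)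
      _ = 2 * E := by simp [mul_comm]
  -- Degree bound: 3V ≤ 2E + 2r
  have h2 : 3 * V ≤ 2 * E + 2 * r := by
    have key : 3 * V ≤ ∑ v : Fin V, deg v
        + 2 * (Finset.univ.filter (fun v : Fin V => deg v < 3)).card := by
      have : ∑ v : Fin V, (3 : ℕ) ≤
          ∑ v : Fin V, (deg v + if deg v < 3 then 2 else 0) := by
        apply Finset.sum_le_sum
        intro v _
        have := hmindeg v
        by_cases h : deg v < 3 <;> simp [h] <;> omega
      have hsplit : ∑ v : Fin V, (deg v + if deg v < 3 then 2 else 0)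
          = ∑ v : Fin V, deg v + ∑ v : Fin V, (if deg v < 3 then 2 else 0) :=
        Finset.sum_add_distrib
      have hind : ∑ v : Fin V, (if deg v < 3 then 2 else 0)
          = 2 * (Finset.univ.filter (fun v : Fin V => deg v < 3)).card := by
        rw [← Finset.sum_filter]
        simp [mul_comm]
      simp only [Finset.sum_const, Finset.card_univ, Fintype.card_fin, smul_eq_mul,
        mul_comm] at this
      omega
    rw [handshake] at key
    omega
  omega
end

section
/- Two closed curves γ₀ and γ₁ in ℝ² \ {a} are homotopic (through closed curves avoiding a) if and only if they have the same winding number about a. -/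
/-!
Write `γⱼ = a + exp ℓⱼ` with `ℓⱼ = log rⱼ + 2πiθⱼ`. The increment `ℓⱼ(1) - ℓⱼ(0)` has imaginary
part `2π` times the winding number, and real part `0` because `γⱼ` is closed. Since `exp` is a
covering of `ℂ \ {0}` and the square is simply connected, a homotopy `H` lifts to `H - a = exp G`;
continuous lifts of one map differ by a constant, so `G(1,t) - G(0,t)` does not depend on `t` and
equals both increments. Conversely, if the increments agree, `a + exp((1-t)ℓ₀ + tℓ₁)` is a
homotopy of closed curves.
-/

open Set Complex
open scoped Real

theorem IsPreconnected.sub_eq_sub_of_cexp_eq {α : Type*} [TopologicalSpace α] {S : Set α}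
    (hS : IsPreconnected S) {g₁ g₂ : α → ℂ} (hg₁ : ContinuousOn g₁ S) (hg₂ : ContinuousOn g₂ S)
    (h : ∀ x ∈ S, exp (g₁ x) = exp (g₂ x)) {x y : α} (hx : x ∈ S) (hy : y ∈ S) :
    g₁ y - g₁ x = g₂ y - g₂ x := by
  have hdiscrete : MapsTo (fun z ↦ g₁ z - g₂ z) S (AddSubgroup.zmultiples (2 * π * I)) := by
    intro z hz
    obtain ⟨n, hn⟩ := exp_eq_exp_iff_exists_int.mp (h z hz)
    exact ⟨n, by simp [hn]⟩
  have hconst : g₁ x - g₂ x = g₁ y - g₂ y :=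
    hS.constant_of_mapsTo (f := fun z ↦ g₁ z - g₂ z)
      (isDiscrete_iff_discreteTopology.mpr (NormedSpace.discreteTopology_zmultiples _))
      (hg₁.sub hg₂) hdiscrete hx hy
  linear_combination -hconst

theorem Convex.exists_continuousOn_cexp_eq {E : Type*} [AddCommGroup E] [Module ℝ E]
    [TopologicalSpace E] [IsTopologicalAddGroup E] [ContinuousSMul ℝ E] [LocallyConvexSpace ℝ E]
    {S : Set E} (hS : Convex ℝ S) {f : E → ℂ} (hf : ContinuousOn f S) (hf₀ : ∀ x ∈ S, f x ≠ 0) :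
    ∃ g : E → ℂ, ContinuousOn g S ∧ ∀ x ∈ S, exp (g x) = f x := by
  obtain rfl | ⟨x₀, hx₀⟩ := S.eq_empty_or_nonempty
  · exact ⟨0, continuousOn_empty _, fun _ ↦ False.elim⟩
  have := hS.contractibleSpace ⟨x₀, hx₀⟩
  have := hS.locallyPathConnectedSpace
  obtain ⟨G, ⟨-, hG⟩, -⟩ := isCoveringMapOn_exp.existsUnique_continuousMap_lifts
    ⟨S.domRestrict f, hf.domRestrict⟩ (a₀ := ⟨x₀, hx₀⟩) (exp_log (hf₀ x₀ hx₀)) fun x ↦ hf₀ x x.2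
  classical
  refine ⟨fun x ↦ if hx : x ∈ S then G ⟨x, hx⟩ else 0, ?_, fun x hx ↦ ?_⟩
  · rw [continuousOn_iff_continuous_domRestrict]
    convert G.continuous
    ext x
    simp [x.2]
  · simpa [hx] using congrFun hG ⟨x, hx⟩

def IsLoopHomotopyAvoiding (a : ℂ) (γ₀ γ₁ : ℝ → ℂ) (H : ℝ → ℝ → ℂ) : Prop :=
  ContinuousOn (fun p : ℝ × ℝ => H p.1 p.2) (Icc 0 1 ×ˢ Icc 0 1) ∧
    (∀ x ∈ Icc (0:ℝ) 1, H x 0 = γ₀ x) ∧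
    (∀ x ∈ Icc (0:ℝ) 1, H x 1 = γ₁ x) ∧
    (∀ t ∈ Icc (0:ℝ) 1, H 0 t = H 1 t) ∧
    (∀ x ∈ Icc (0:ℝ) 1, ∀ t ∈ Icc (0:ℝ) 1, H x t ≠ a)

namespace IsLoopHomotopyAvoiding

variable {a : ℂ} {γ₀ γ₁ : ℝ → ℂ} {ℓ₀ ℓ₁ : ℝ → ℂ}

theorem sub_eq_sub {H : ℝ → ℝ → ℂ} (hH : IsLoopHomotopyAvoiding a γ₀ γ₁ H)
    (hℓ₀ : ContinuousOn ℓ₀ (Icc 0 1)) (hℓ₁ : ContinuousOn ℓ₁ (Icc 0 1))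
    (he₀ : ∀ x ∈ Icc (0:ℝ) 1, a + exp (ℓ₀ x) = γ₀ x)
    (he₁ : ∀ x ∈ Icc (0:ℝ) 1, a + exp (ℓ₁ x) = γ₁ x) :
    ℓ₀ 1 - ℓ₀ 0 = ℓ₁ 1 - ℓ₁ 0 := by
  obtain ⟨hcont, hH₀, hH₁, hloop, hne⟩ := hH
  have h0 : (0 : ℝ) ∈ Icc (0 : ℝ) 1 := left_mem_Icc.mpr zero_le_one
  have h1 : (1 : ℝ) ∈ Icc (0 : ℝ) 1 := right_mem_Icc.mpr zero_le_one
  obtain ⟨G, hG, hGe⟩ : ∃ G : ℝ × ℝ → ℂ, ContinuousOn G (Icc 0 1 ×ˢ Icc 0 1) ∧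
      ∀ p ∈ Icc (0 : ℝ) 1 ×ˢ Icc (0 : ℝ) 1, exp (G p) = H p.1 p.2 - a :=
    ((convex_Icc 0 1).prod (convex_Icc 0 1)).exists_continuousOn_cexp_eq
      (hcont.sub continuousOn_const) fun p hp ↦ sub_ne_zero.mpr (hne _ hp.1 _ hp.2)
  have hrow : ∀ t ∈ Icc (0 : ℝ) 1, ContinuousOn (fun x ↦ G (x, t)) (Icc 0 1) := fun t ht ↦
    hG.comp (Continuous.prodMk_left t).continuousOn fun x hx ↦ ⟨hx, ht⟩
  have hcol : ∀ x ∈ Icc (0 : ℝ) 1, ContinuousOn (fun t ↦ G (x, t)) (Icc 0 1) := fun x hx ↦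
    hG.comp (Continuous.prodMk_right x).continuousOn fun t ht ↦ ⟨hx, ht⟩
  have hbottom : ℓ₀ 1 - ℓ₀ 0 = G (1, 0) - G (0, 0) :=
    isPreconnected_Icc.sub_eq_sub_of_cexp_eq hℓ₀ (hrow 0 h0)
      (fun x hx ↦ by rw [hGe (x, 0) ⟨hx, h0⟩, hH₀ x hx, ← he₀ x hx, add_sub_cancel_left]) h0 h1
  have htop : ℓ₁ 1 - ℓ₁ 0 = G (1, 1) - G (0, 1) :=
    isPreconnected_Icc.sub_eq_sub_of_cexp_eq hℓ₁ (hrow 1 h1)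
      (fun x hx ↦ by rw [hGe (x, 1) ⟨hx, h1⟩, hH₁ x hx, ← he₁ x hx, add_sub_cancel_left]) h0 h1
  have hsides : G (1, 1) - G (1, 0) = G (0, 1) - G (0, 0) :=
    isPreconnected_Icc.sub_eq_sub_of_cexp_eq (hcol 1 h1) (hcol 0 h0)
      (fun t ht ↦ by rw [hGe (1, t) ⟨h1, ht⟩, hGe (0, t) ⟨h0, ht⟩, hloop t ht]) h0 h1
  linear_combination hbottom - htop - hsides

theorem of_sub_eq (hℓ₀ : ContinuousOn ℓ₀ (Icc 0 1)) (hℓ₁ : ContinuousOn ℓ₁ (Icc 0 1))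
    (he₀ : ∀ x ∈ Icc (0:ℝ) 1, a + exp (ℓ₀ x) = γ₀ x)
    (he₁ : ∀ x ∈ Icc (0:ℝ) 1, a + exp (ℓ₁ x) = γ₁ x)
    (hloop : exp (ℓ₀ 0) = exp (ℓ₀ 1)) (hsub : ℓ₀ 1 - ℓ₀ 0 = ℓ₁ 1 - ℓ₁ 0) :
    IsLoopHomotopyAvoiding a γ₀ γ₁ fun x t ↦ a + exp ((1 - t) * ℓ₀ x + t * ℓ₁ x) := by
  refine ⟨?_, fun x hx ↦ by simpa using he₀ x hx, fun x hx ↦ by simpa using he₁ x hx,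
    fun t _ ↦ ?_, fun x _ t _ ↦ by simp [exp_ne_zero]⟩
  · have hfst : MapsTo Prod.fst (Icc (0 : ℝ) 1 ×ˢ Icc (0 : ℝ) 1) (Icc 0 1) := fun p hp ↦ hp.1
    exact continuousOn_const.add <| continuous_exp.comp_continuousOn <|
      ((continuous_const.sub (continuous_ofReal.comp continuous_snd)).continuousOn.mul
        (hℓ₀.comp continuous_fst.continuousOn hfst)).add
      ((continuous_ofReal.comp continuous_snd).continuousOn.mul
        (hℓ₁.comp continuous_fst.continuousOn hfst))
  · have hperiod : exp (ℓ₀ 1 - ℓ₀ 0) = 1 := by rw [exp_sub, hloop, div_self (exp_ne_zero _)]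
    have hshift : (1 - t) * ℓ₀ 1 + t * ℓ₁ 1 = (1 - t) * ℓ₀ 0 + t * ℓ₁ 0 + (ℓ₀ 1 - ℓ₀ 0) := by
      linear_combination -t * hsub
    beta_reduce
    rw [hshift, exp_add _ (ℓ₀ 1 - ℓ₀ 0), hperiod, mul_one]

end IsLoopHomotopyAvoiding

theorem re_sub_eq_zero_of_cexp_eq {z w : ℂ} (h : exp z = exp w) : (z - w).re = 0 := by
  obtain ⟨n, rfl⟩ := exp_eq_exp_iff_exists_int.mp h
  simp

noncomputable def polarLift (r θ : ℝ → ℝ) (x : ℝ) : ℂ :=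
  (Real.log (r x) : ℂ) + 2 * π * I * (θ x : ℂ)

theorem cexp_polarLift {r : ℝ → ℝ} (θ : ℝ → ℝ) {x : ℝ} (hx : 0 < r x) :
    exp (polarLift r θ x) = (r x : ℂ) * exp (2 * π * I * (θ x : ℂ)) := by
  rw [polarLift, exp_add, ← ofReal_exp, Real.exp_log hx]

theorem continuousOn_polarLift {r θ : ℝ → ℝ} {s : Set ℝ} (hr : ContinuousOn r s)
    (hθ : ContinuousOn θ s) (hpos : ∀ x ∈ s, 0 < r x) : ContinuousOn (polarLift r θ) s :=
  (continuous_ofReal.comp_continuousOn (hr.log fun x hx ↦ (hpos x hx).ne')).add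
    (continuousOn_const.mul (continuous_ofReal.comp_continuousOn hθ))

theorem im_polarLift_sub (r θ : ℝ → ℝ) (x y : ℝ) :
    (polarLift r θ y - polarLift r θ x).im = 2 * π * (θ y - θ x) := by
  simp [polarLift]
  ring

theorem closed_curves_homotopic_iff_same_winding_number_general
    (a : ℂ) (γ₀ γ₁ : ℝ → ℂ) (r₀ r₁ θ₀ θ₁ : ℝ → ℝ)
    (hc₀ : γ₀ 0 = γ₀ 1) (hc₁ : γ₁ 0 = γ₁ 1)
    (hr₀ : ContinuousOn r₀ (Icc 0 1)) (hr₁ : ContinuousOn r₁ (Icc 0 1))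
    (hrpos₀ : ∀ t ∈ Icc (0:ℝ) 1, 0 < r₀ t) (hrpos₁ : ∀ t ∈ Icc (0:ℝ) 1, 0 < r₁ t)
    (hθ₀ : ContinuousOn θ₀ (Icc 0 1)) (hθ₁ : ContinuousOn θ₁ (Icc 0 1))
    (hpolar₀ : ∀ t ∈ Icc (0:ℝ) 1,
      γ₀ t = a + (r₀ t : ℂ) * Complex.exp (2 * Real.pi * Complex.I * (θ₀ t : ℂ)))
    (hpolar₁ : ∀ t ∈ Icc (0:ℝ) 1,
      γ₁ t = a + (r₁ t : ℂ) * Complex.exp (2 * Real.pi * Complex.I * (θ₁ t : ℂ))) :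
    (∃ H : ℝ → ℝ → ℂ,
      ContinuousOn (fun p : ℝ × ℝ => H p.1 p.2) (Icc 0 1 ×ˢ Icc 0 1) ∧
      (∀ x ∈ Icc (0:ℝ) 1, H x 0 = γ₀ x) ∧
      (∀ x ∈ Icc (0:ℝ) 1, H x 1 = γ₁ x) ∧
      (∀ t ∈ Icc (0:ℝ) 1, H 0 t = H 1 t) ∧
      (∀ x ∈ Icc (0:ℝ) 1, ∀ t ∈ Icc (0:ℝ) 1, H x t ≠ a)) ↔
    θ₀ 1 - θ₀ 0 = θ₁ 1 - θ₁ 0 := by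
  change (∃ H, IsLoopHomotopyAvoiding a γ₀ γ₁ H) ↔ _
  have h0 : (0 : ℝ) ∈ Icc (0 : ℝ) 1 := left_mem_Icc.mpr zero_le_one
  have h1 : (1 : ℝ) ∈ Icc (0 : ℝ) 1 := right_mem_Icc.mpr zero_le_one
  set ℓ₀ := polarLift r₀ θ₀
  set ℓ₁ := polarLift r₁ θ₁
  have hℓ₀ : ContinuousOn ℓ₀ (Icc 0 1) := continuousOn_polarLift hr₀ hθ₀ hrpos₀
  have hℓ₁ : ContinuousOn ℓ₁ (Icc 0 1) := continuousOn_polarLift hr₁ hθ₁ hrpos₁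
  have he₀ : ∀ x ∈ Icc (0:ℝ) 1, a + exp (ℓ₀ x) = γ₀ x := fun x hx ↦ by
    rw [cexp_polarLift θ₀ (hrpos₀ x hx), hpolar₀ x hx]
  have he₁ : ∀ x ∈ Icc (0:ℝ) 1, a + exp (ℓ₁ x) = γ₁ x := fun x hx ↦ by
    rw [cexp_polarLift θ₁ (hrpos₁ x hx), hpolar₁ x hx]
  have hloop₀ : exp (ℓ₀ 0) = exp (ℓ₀ 1) := add_left_cancel <| by rw [he₀ 0 h0, he₀ 1 h1, hc₀]
  have hloop₁ : exp (ℓ₁ 0) = exp (ℓ₁ 1) := add_left_cancel <| by rw [he₁ 0 h0, he₁ 1 h1, hc₁]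
  rw [← mul_right_inj' Real.two_pi_pos.ne', ← im_polarLift_sub, ← im_polarLift_sub]
  constructor
  · rintro ⟨H, hH⟩
    exact congrArg im (hH.sub_eq_sub hℓ₀ hℓ₁ he₀ he₁)
  · intro him
    have hre : (ℓ₀ 1 - ℓ₀ 0).re = (ℓ₁ 1 - ℓ₁ 0).re := by
      rw [re_sub_eq_zero_of_cexp_eq hloop₀.symm, re_sub_eq_zero_of_cexp_eq hloop₁.symm]
    exact ⟨_, .of_sub_eq hℓ₀ hℓ₁ he₀ he₁ hloop₀ (Complex.ext hre him)⟩

/-- Two closed curves `γ₀` and `γ₁` in `ℝ² \ {a}` are homotopic (through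
closed curves avoiding `a`) if and only if they have the same winding number about `a`.

Each curve is given with a polar decomposition `γⱼ = a + rⱼ·exp(2πiθⱼ)` with continuous
`rⱼ : [0,1] → ℝ_{>0}` and `θⱼ : [0,1] → ℝ`; the winding number of `γⱼ` about `a` is
`θⱼ(1) - θⱼ(0)`. A homotopy is a continuous `H : [0,1]² → ℂ \ {a}` with `H(·,0) = γ₀`,
`H(·,1) = γ₁`, and `H(0,t) = H(1,t)` for all `t`. -/
theorem closed_curves_homotopic_iff_same_winding_number
    (a : ℂ) (γ₀ γ₁ : ℝ → ℂ) (r₀ r₁ θ₀ θ₁ : ℝ → ℝ)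
    (hγ₀ : ContinuousOn γ₀ (Icc 0 1)) (hγ₁ : ContinuousOn γ₁ (Icc 0 1))
    (hc₀ : γ₀ 0 = γ₀ 1) (hc₁ : γ₁ 0 = γ₁ 1)
    (hr₀ : ContinuousOn r₀ (Icc 0 1)) (hr₁ : ContinuousOn r₁ (Icc 0 1))
    (hrpos₀ : ∀ t ∈ Icc (0:ℝ) 1, 0 < r₀ t) (hrpos₁ : ∀ t ∈ Icc (0:ℝ) 1, 0 < r₁ t)
    (hθ₀ : ContinuousOn θ₀ (Icc 0 1)) (hθ₁ : ContinuousOn θ₁ (Icc 0 1))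
    (hpolar₀ : ∀ t ∈ Icc (0:ℝ) 1,
      γ₀ t = a + (r₀ t : ℂ) * Complex.exp (2 * Real.pi * Complex.I * (θ₀ t : ℂ)))
    (hpolar₁ : ∀ t ∈ Icc (0:ℝ) 1,
      γ₁ t = a + (r₁ t : ℂ) * Complex.exp (2 * Real.pi * Complex.I * (θ₁ t : ℂ))) :
    (∃ H : ℝ → ℝ → ℂ,
      ContinuousOn (fun p : ℝ × ℝ => H p.1 p.2) (Icc 0 1 ×ˢ Icc 0 1) ∧
      (∀ x ∈ Icc (0:ℝ) 1, H x 0 = γ₀ x) ∧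
      (∀ x ∈ Icc (0:ℝ) 1, H x 1 = γ₁ x) ∧
      (∀ t ∈ Icc (0:ℝ) 1, H 0 t = H 1 t) ∧
      (∀ x ∈ Icc (0:ℝ) 1, ∀ t ∈ Icc (0:ℝ) 1, H x t ≠ a)) ↔
    θ₀ 1 - θ₀ 0 = θ₁ 1 - θ₁ 0 :=
  closed_curves_homotopic_iff_same_winding_number_general a γ₀ γ₁ r₀ r₁ θ₀ θ₁ hc₀ hc₁ hr₀ hr₁ hrpos₀
    hrpos₁ hθ₀ hθ₁ hpolar₀ hpolar₁
end

section
/- Suppose g : ℕ × ℤ → ℕ satisfies g(n,-1) = 1 for all n, g(1,k) = 1 and g(2,k) = 4 for all k ≥ 0, g(n,k) = g(n,n-1) for k ≥ n, and g(n+1,k) ≤ g(n,k) + 2·g(n,k-1) + 2 for all n ≥ 1, k ≥ 0. Then g(n,k) ≤ 2·binom(2n, k+1) for all n ≥ 1 and -1 ≤ k ≤ n-1. -/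
/-!
Induction on `n`. Off the diagonal, Pascal's rule applied twice gives
`C(2n+2, k+1) = C(2n, k+1) + 2 C(2n, k) + C(2n, k-1)`, and the last term (at least `1` when
`k ≥ 1`; for `k = 0` one uses `g(n,-1) = 1` exactly) absorbs the additive constant of the
recurrence. On the diagonal, `g(n,n) = g(n,n-1)` turns the recurrence into
`g(n+1,n) ≤ 3 g(n,n-1) + 2`, and `C(2n+2, n+1) / C(2n, n) = (4n+2)/(n+1) > 3` for `n ≥ 2`
leaves room for the constant; the step from `n = 1` uses `g(1,0) = 1`.
-/

theorem Nat.choose_add_two_add_two (m s : ℕ) :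
    (m + 2).choose (s + 2) = m.choose s + 2 * m.choose (s + 1) + m.choose (s + 2) := by
  rw [Nat.choose_succ_succ, Nat.choose_succ_succ, Nat.choose_succ_succ m (s + 1)]
  ring

theorem Nat.three_mul_centralBinom_add_one_le_centralBinom_succ {n : ℕ} (hn : 2 ≤ n) :
    3 * n.centralBinom + 1 ≤ (n + 1).centralBinom := by
  have hsucc := Nat.succ_mul_centralBinom_succ n
  have hlow : 2 * n ≤ n.centralBinom := by
    simpa using Nat.choose_le_centralBinom 1 n
  refine Nat.le_of_mul_le_mul_left (c := n + 1) ?_ n.succ_pos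
  rw [hsucc]
  nlinarith

section

variable {g : ℕ → ℤ → ℕ}

theorem succ_le_two_mul_choose_of_lt
    (h_neg : ∀ n : ℕ, g n (-1) = 1)
    (h_rec : ∀ (n : ℕ), 1 ≤ n → ∀ k : ℤ, 0 ≤ k →
      g (n + 1) k ≤ g n k + 2 * g n (k - 1) + 2)
    {n : ℕ} (hn : 1 ≤ n) (ih : ∀ m < n, g n m ≤ 2 * (2 * n).choose (m + 1))
    {m : ℕ} (hm : m < n) :
    g (n + 1) m ≤ 2 * (2 * n + 2).choose (m + 1) := by
  have hrec (m : ℕ) : g (n + 1) m ≤ g n m + 2 * g n (m - 1) + 2 :=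
    h_rec n hn m m.cast_nonneg
  rcases m with _ | i
  · have h0 := hrec 0
    have ih0 := ih 0 hn
    simp only [Nat.cast_zero, zero_sub, h_neg, zero_add, Nat.choose_one_right] at h0 ih0 ⊢
    omega
  · have hrec' : g (n + 1) ↑(i + 1) ≤ g n ↑(i + 1) + 2 * g n i + 2 := by
      simpa using hrec (i + 1)
    have ih₁ : g n ↑(i + 1) ≤ 2 * (2 * n).choose (i + 2) := ih (i + 1) hm
    have ih₀ : g n i ≤ 2 * (2 * n).choose (i + 1) := ih i (by omega)
    have hpascal := Nat.choose_add_two_add_two (2 * n) i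
    have hpos : 0 < (2 * n).choose i := Nat.choose_pos (by omega)
    show _ ≤ 2 * (2 * n + 2).choose (i + 2)
    omega

theorem succ_le_two_mul_centralBinom
    (h_one : ∀ k : ℤ, 0 ≤ k → g 1 k = 1)
    (h_large : ∀ (n : ℕ) (k : ℤ), (n : ℤ) ≤ k → g n k = g n ((n : ℤ) - 1))
    (h_rec : ∀ (n : ℕ), 1 ≤ n → ∀ k : ℤ, 0 ≤ k →
      g (n + 1) k ≤ g n k + 2 * g n (k - 1) + 2)
    (i : ℕ) (ih : g (i + 1) i ≤ 2 * (i + 1).centralBinom) :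
    g (i + 2) (i + 1) ≤ 2 * (i + 2).centralBinom := by
  have hrec : g (i + 2) (i + 1) ≤ g (i + 1) (i + 1) + 2 * g (i + 1) (i + 1 - 1) + 2 :=
    h_rec (i + 1) (by omega) (i + 1) (by positivity)
  have hdiag : g (i + 1) (i + 1) = g (i + 1) i := by
    simpa using h_large (i + 1) (i + 1)
  rw [hdiag, add_sub_cancel_right] at hrec
  rcases Nat.eq_zero_or_pos i with rfl | hi
  · have h10 := h_one 0 le_rfl
    simp only [Nat.cast_zero, zero_add] at hrec h10 ⊢
    rw [h10] at hrec
    exact hrec.trans (by decide)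
  · have : 3 * (i + 1).centralBinom + 1 ≤ (i + 2).centralBinom :=
      Nat.three_mul_centralBinom_add_one_le_centralBinom_succ (by omega)
    omega

theorem le_two_mul_choose
    (h_neg : ∀ n : ℕ, g n (-1) = 1)
    (h_one : ∀ k : ℤ, 0 ≤ k → g 1 k = 1)
    (h_large : ∀ (n : ℕ) (k : ℤ), (n : ℤ) ≤ k → g n k = g n ((n : ℤ) - 1))
    (h_rec : ∀ (n : ℕ), 1 ≤ n → ∀ k : ℤ, 0 ≤ k →
      g (n + 1) k ≤ g n k + 2 * g n (k - 1) + 2)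
    {n : ℕ} (hn : 1 ≤ n) {m : ℕ} (hm : m < n) :
    g n m ≤ 2 * (2 * n).choose (m + 1) := by
  induction n, hn using Nat.le_induction generalizing m with
  | base =>
    obtain rfl : m = 0 := by omega
    simp [h_one]
  | succ n hn ih =>
    rcases (Nat.lt_succ_iff.mp hm).lt_or_eq with hlt | rfl
    · exact succ_le_two_mul_choose_of_lt h_neg h_rec hn (fun m hm => ih hm) hlt
    · obtain ⟨i, rfl⟩ : ∃ i, m = i + 1 := ⟨m - 1, by omega⟩
      have ih' := ih (m := i) (by omega)
      rw [← Nat.centralBinom_eq_two_mul_choose] at ih' ⊢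
      exact succ_le_two_mul_centralBinom h_one h_large h_rec i ih'

end

theorem g_bound_general (g : ℕ → ℤ → ℕ)
    (h_neg : ∀ n : ℕ, g n (-1) = 1)
    (h_one : ∀ k : ℤ, 0 ≤ k → g 1 k = 1)
    (h_large : ∀ (n : ℕ) (k : ℤ), (n : ℤ) ≤ k → g n k = g n ((n : ℤ) - 1))
    (h_rec : ∀ (n : ℕ), 1 ≤ n → ∀ k : ℤ, 0 ≤ k →
      g (n + 1) k ≤ g n k + 2 * g n (k - 1) + 2) :
    ∀ (n : ℕ), 1 ≤ n → ∀ k : ℤ, -1 ≤ k → k ≤ (n : ℤ) - 1 →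
      g n k ≤ 2 * Nat.choose (2 * n) (k + 1).toNat := by
  intro n hn k hk₁ hk₂
  rcases hk₁.eq_or_lt with rfl | hk₀
  · simp [h_neg]
  · obtain ⟨m, rfl⟩ := Int.eq_ofNat_of_zero_le (by omega : 0 ≤ k)
    rw [show ((m : ℤ) + 1).toNat = m + 1 by omega]
    exact le_two_mul_choose h_neg h_one h_large h_rec hn (by omega)

/-- Suppose `g : ℕ × ℤ → ℕ` satisfies `g(n,-1) = 1` for all `n`,
`g(1,k) = 1` and `g(2,k) = 4` for all `k ≥ 0`, `g(n,k) = g(n,n-1)` for `k ≥ n`, and the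
recurrence `g(n+1,k) ≤ g(n,k) + 2·g(n,k-1) + 2` for all `n ≥ 1`, `k ≥ 0`. Then
`g(n,k) ≤ 2·binom(2n, k+1)` for all `n ≥ 1` and `-1 ≤ k ≤ n-1`. -/
theorem g_bound (g : ℕ → ℤ → ℕ)
    (h_neg : ∀ n : ℕ, g n (-1) = 1)
    (h_one : ∀ k : ℤ, 0 ≤ k → g 1 k = 1)
    (h_two : ∀ k : ℤ, 0 ≤ k → g 2 k = 4)
    (h_large : ∀ (n : ℕ) (k : ℤ), (n : ℤ) ≤ k → g n k = g n ((n : ℤ) - 1))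
    (h_rec : ∀ (n : ℕ), 1 ≤ n → ∀ k : ℤ, 0 ≤ k →
      g (n + 1) k ≤ g n k + 2 * g n (k - 1) + 2) :
    ∀ (n : ℕ), 1 ≤ n → ∀ k : ℤ, -1 ≤ k → k ≤ (n : ℤ) - 1 →
      g n k ≤ 2 * Nat.choose (2 * n) (k + 1).toNat :=
  g_bound_general g h_neg h_one h_large h_rec
end
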